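/- arXiv:1503.01930 — 2 statements merged into one kernel-verified Lean document; each statement's English description precedes it below -/
import Mathlib

section
/- Let a ∈ ℝ and b, c > 0, and define K on the open set U = {(x, y) ∈ ℝ² : |y| < x} by K(x, y) = a + (2bx + c)/(x² − y²). Then the Hessian matrix of K (the 2×2 matrix of second partial derivatives) is positive definite at every point of U. -/
/-!
With `u = x + y` and `v = x - y`, both positive on `U`, one has `K = a + b/u + b/v + c/(uv)`, a
positive combination of convex functions of `(u, v)` of which `c/(uv)` is strictly convex. Directly:
the Hessian has a positive `(1,1)` entry and determinant `4 (4b²(x²-y²) + 8bcx + 3c²) / (x²-y²)⁴`.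
-/

/-- Partial derivative with respect to the first variable. -/
noncomputable def pdx (f : ℝ × ℝ → ℝ) (p : ℝ × ℝ) : ℝ := fderiv ℝ f p (1, 0)

/-- Partial derivative with respect to the second variable. -/
noncomputable def pdy (f : ℝ × ℝ → ℝ) (p : ℝ × ℝ) : ℝ := fderiv ℝ f p (0, 1)

/-- The Hessian matrix of second partial derivatives. -/
noncomputable def hessian (f : ℝ × ℝ → ℝ) (p : ℝ × ℝ) : Matrix (Fin 2) (Fin 2) ℝ :=
  !![pdx (pdx f) p, pdx (pdy f) p;
     pdy (pdx f) p, pdy (pdy f) p]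

open ContinuousLinearMap Matrix Topology

theorem HasFDerivAt.div {𝕜 E : Type*} [NontriviallyNormedField 𝕜] [NormedAddCommGroup E]
    [NormedSpace 𝕜 E] {c d : E → 𝕜} {c' d' : E →L[𝕜] 𝕜} {x : E}
    (hc : HasFDerivAt c c' x) (hd : HasFDerivAt d d' x) (hx : d x ≠ 0) :
    HasFDerivAt (fun y => c y / d y) ((d x ^ 2)⁻¹ • (d x • c' - c x • d')) x := by
  simp only [div_eq_mul_inv]
  refine (hc.mul ((hasFDerivAt_inv hx).comp x hd)).congr_fderiv ?_
  ext v
  simp only [Function.comp_apply, _root_.add_apply, _root_.smul_apply,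
    ContinuousLinearMap.comp_apply, toSpanSingleton_apply, smul_eq_mul, mul_neg,
    _root_.sub_apply]
  field_simp
  ring

theorem Matrix.posDef_fin_two_of_pos_of_det_pos {A B C : ℝ} (hA : 0 < A)
    (hdet : 0 < A * C - B ^ 2) : !![A, B; B, C].PosDef := by
  refine posDef_iff_dotProduct_mulVec.2 ⟨?_, fun v hv => ?_⟩
  · ext i j
    fin_cases i <;> fin_cases j <;> rfl
  · have hsq : A * (star v ⬝ᵥ (!![A, B; B, C] *ᵥ v)) =
        (A * v 0 + B * v 1) ^ 2 + (A * C - B ^ 2) * v 1 ^ 2 := by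
      simp only [dotProduct, Pi.star_apply, star_trivial, mulVec, of_apply, cons_val',
        cons_val_fin_one, Fin.sum_univ_two, cons_val_zero, cons_val_one]
      ring
    refine pos_of_mul_pos_right (hsq ▸ ?_) hA.le
    rcases eq_or_ne (v 1) 0 with h1 | h1
    · have h0 : v 0 ≠ 0 := fun h0 => hv (funext fun i => by fin_cases i <;> simp [h0, h1])
      simpa [h1] using pow_two_pos_of_ne_zero (mul_ne_zero hA.ne' h0)
    · positivity

theorem hessian_eq_of_hasFDerivAt {f fx fy : ℝ × ℝ → ℝ} {p : ℝ × ℝ} {fxx fxy fyx fyy : ℝ}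
    (hf : ∀ᶠ q in 𝓝 p, HasFDerivAt f (fx q • fst ℝ ℝ ℝ + fy q • snd ℝ ℝ ℝ) q)
    (hfx : HasFDerivAt fx (fxx • fst ℝ ℝ ℝ + fxy • snd ℝ ℝ ℝ) p)
    (hfy : HasFDerivAt fy (fyx • fst ℝ ℝ ℝ + fyy • snd ℝ ℝ ℝ) p) :
    hessian f p = !![fxx, fyx; fxy, fyy] := by
  have hpdx : pdx f =ᶠ[𝓝 p] fx := hf.mono fun q hq => by simp [pdx, hq.fderiv]
  have hpdy : pdy f =ᶠ[𝓝 p] fy := hf.mono fun q hq => by simp [pdy, hq.fderiv]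
  simp [hessian, pdx, pdy, hpdx.fderiv_eq, hpdy.fderiv_eq, hfx.fderiv, hfy.fderiv]

section LinearWeingarten

variable {a b c : ℝ} {q : ℝ × ℝ}

theorem hasFDerivAt_linearWeingarten (hq : q.1 ^ 2 - q.2 ^ 2 ≠ 0) :
    HasFDerivAt (fun q : ℝ × ℝ => a + (2 * b * q.1 + c) / (q.1 ^ 2 - q.2 ^ 2))
      ((-2 * (b * (q.1 ^ 2 + q.2 ^ 2) + c * q.1) / (q.1 ^ 2 - q.2 ^ 2) ^ 2) • fst ℝ ℝ ℝ +
        (2 * q.2 * (2 * b * q.1 + c) / (q.1 ^ 2 - q.2 ^ 2) ^ 2) • snd ℝ ℝ ℝ) q := by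
  have hx : HasFDerivAt Prod.fst (fst ℝ ℝ ℝ) q := hasFDerivAt_fst
  have hy : HasFDerivAt Prod.snd (snd ℝ ℝ ℝ) q := hasFDerivAt_snd
  refine ((((hx.const_mul (2 * b)).add_const c).div ((hx.pow 2).sub (hy.pow 2)) hq).const_add
    a).congr_fderiv ?_
  ext
  · simp
    field_simp
    ring
  · simp
    field_simp

theorem hasFDerivAt_partialX_linearWeingarten (hq : q.1 ^ 2 - q.2 ^ 2 ≠ 0) :
    HasFDerivAt
      (fun q : ℝ × ℝ => -2 * (b * (q.1 ^ 2 + q.2 ^ 2) + c * q.1) / (q.1 ^ 2 - q.2 ^ 2) ^ 2)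
      ((2 * (2 * b * q.1 ^ 3 + 6 * b * q.1 * q.2 ^ 2 + 3 * c * q.1 ^ 2 + c * q.2 ^ 2) /
          (q.1 ^ 2 - q.2 ^ 2) ^ 3) • fst ℝ ℝ ℝ +
        (-4 * q.2 * (3 * b * q.1 ^ 2 + b * q.2 ^ 2 + 2 * c * q.1) /
          (q.1 ^ 2 - q.2 ^ 2) ^ 3) • snd ℝ ℝ ℝ) q := by
  have hx : HasFDerivAt Prod.fst (fst ℝ ℝ ℝ) q := hasFDerivAt_fst
  have hy : HasFDerivAt Prod.snd (snd ℝ ℝ ℝ) q := hasFDerivAt_snd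
  refine (((((hx.pow 2).add (hy.pow 2)).const_mul b).add (hx.const_mul c)).const_mul (-2) |>.div
    (((hx.pow 2).sub (hy.pow 2)).pow 2) (pow_ne_zero 2 hq)).congr_fderiv ?_
  ext <;> simp <;> field_simp <;> ring

theorem hasFDerivAt_partialY_linearWeingarten (hq : q.1 ^ 2 - q.2 ^ 2 ≠ 0) :
    HasFDerivAt (fun q : ℝ × ℝ => 2 * q.2 * (2 * b * q.1 + c) / (q.1 ^ 2 - q.2 ^ 2) ^ 2)
      ((-4 * q.2 * (3 * b * q.1 ^ 2 + b * q.2 ^ 2 + 2 * c * q.1) /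
          (q.1 ^ 2 - q.2 ^ 2) ^ 3) • fst ℝ ℝ ℝ +
        (2 * (2 * b * q.1 ^ 3 + 6 * b * q.1 * q.2 ^ 2 + c * q.1 ^ 2 + 3 * c * q.2 ^ 2) /
          (q.1 ^ 2 - q.2 ^ 2) ^ 3) • snd ℝ ℝ ℝ) q := by
  have hx : HasFDerivAt Prod.fst (fst ℝ ℝ ℝ) q := hasFDerivAt_fst
  have hy : HasFDerivAt Prod.snd (snd ℝ ℝ ℝ) q := hasFDerivAt_snd
  refine ((hy.const_mul 2).mul ((hx.const_mul (2 * b)).add_const c) |>.div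
    (((hx.pow 2).sub (hy.pow 2)).pow 2) (pow_ne_zero 2 hq)).congr_fderiv ?_
  ext <;> simp <;> field_simp <;> ring

end LinearWeingarten

/-- Convexity of the linear Weingarten (Bloore) flow: for `b, c > 0`, the Hessian of
`K = a + (2bx + c)/(x²−y²)` is positive definite on `U = {(x,y) : |y| < x}`. -/
theorem linear_weingarten_convex (a b c : ℝ) (hb : 0 < b) (hc : 0 < c)
    (K : ℝ × ℝ → ℝ)
    (hK : K = fun q : ℝ × ℝ => a + (2 * b * q.1 + c) / (q.1 ^ 2 - q.2 ^ 2)) :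
    ∀ p : ℝ × ℝ, |p.2| < p.1 → (hessian K p).PosDef := by
  subst hK
  rintro ⟨x, y⟩ hp
  obtain ⟨hyx, hxy⟩ := abs_lt.1 hp
  have hx : 0 < x := (abs_nonneg y).trans_lt hp
  have hD : 0 < x ^ 2 - y ^ 2 := sub_pos.2 (sq_lt_sq' hyx hxy)
  have hD_near : ∀ᶠ q in 𝓝 (x, y), q.1 ^ 2 - q.2 ^ 2 ≠ 0 :=
    (show Continuous fun q : ℝ × ℝ => q.1 ^ 2 - q.2 ^ 2 by fun_prop).continuousAt.eventually_ne
      hD.ne'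
  rw [hessian_eq_of_hasFDerivAt (hD_near.mono fun q hq => hasFDerivAt_linearWeingarten hq)
    (hasFDerivAt_partialX_linearWeingarten hD.ne') (hasFDerivAt_partialY_linearWeingarten hD.ne')]
  refine Matrix.posDef_fin_two_of_pos_of_det_pos (by positivity) ?_
  have hdet :
      2 * (2 * b * x ^ 3 + 6 * b * x * y ^ 2 + 3 * c * x ^ 2 + c * y ^ 2) / (x ^ 2 - y ^ 2) ^ 3 *
        (2 * (2 * b * x ^ 3 + 6 * b * x * y ^ 2 + c * x ^ 2 + 3 * c * y ^ 2) / (x ^ 2 - y ^ 2) ^ 3) -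
        (-4 * y * (3 * b * x ^ 2 + b * y ^ 2 + 2 * c * x) / (x ^ 2 - y ^ 2) ^ 3) ^ 2 =
      4 * (4 * b ^ 2 * (x ^ 2 - y ^ 2) + 8 * b * c * x + 3 * c ^ 2) / (x ^ 2 - y ^ 2) ^ 4 := by
    field_simp
    ring
  rw [hdet]
  positivity
end

section
/- Let n be a nonzero real number and define K on the open set U = {(x, y) ∈ ℝ² : |y| < x} by K(x, y) = sgn(n)·xⁿ/(x² − y²)ⁿ. Then the determinant of the Hessian matrix of K equals 2n²(n + 1)·x^{2n−2}/(x² − y²)^{2n+1} at every point of U. -/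
open ContinuousLinearMap Filter Topology

lemma HasFDerivAt.pdx_eq {f : ℝ × ℝ → ℝ} {L : ℝ × ℝ →L[ℝ] ℝ} {p : ℝ × ℝ}
    (h : HasFDerivAt f L p) : pdx f p = L (1, 0) := by
  rw [pdx, h.fderiv]

lemma HasFDerivAt.pdy_eq {f : ℝ × ℝ → ℝ} {L : ℝ × ℝ →L[ℝ] ℝ} {p : ℝ × ℝ}
    (h : HasFDerivAt f L p) : pdy f p = L (0, 1) := by
  rw [pdy, h.fderiv]

lemma pdx_const_smul (c : ℝ) (f : ℝ × ℝ → ℝ) : pdx (c • f) = c • pdx f := by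
  ext p
  simp [pdx, fderiv_const_smul_field]

lemma pdy_const_smul (c : ℝ) (f : ℝ × ℝ → ℝ) : pdy (c • f) = c • pdy f := by
  ext p
  simp [pdy, fderiv_const_smul_field]

lemma hessian_const_smul (c : ℝ) (f : ℝ × ℝ → ℝ) (p : ℝ × ℝ) :
    hessian (c • f) p = c • hessian f p := by
  ext i j
  fin_cases i <;> fin_cases j <;>
    simp [hessian, pdx_const_smul, pdy_const_smul]

lemma hessian_congr {f g : ℝ × ℝ → ℝ} {p : ℝ × ℝ} (h : f =ᶠ[𝓝 p] g) :
    hessian f p = hessian g p := by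
  have hx : pdx f =ᶠ[𝓝 p] pdx g := h.eventuallyEq_nhds.mono fun q hq => by
    simp only [pdx, hq.fderiv_eq]
  have hy : pdy f =ᶠ[𝓝 p] pdy g := h.eventuallyEq_nhds.mono fun q hq => by
    simp only [pdy, hq.fderiv_eq]
  simp only [hessian, pdx, pdy, hx.fderiv_eq, hy.fderiv_eq]

def cone : Set (ℝ × ℝ) := {q | |q.2| < q.1}

lemma isOpen_cone : IsOpen cone :=
  isOpen_lt (continuous_abs.comp continuous_snd) continuous_fst

lemma fst_pos_of_mem_cone {q : ℝ × ℝ} (hq : q ∈ cone) : 0 < q.1 :=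
  (abs_nonneg _).trans_lt hq

lemma sq_sub_sq_pos_of_mem_cone {q : ℝ × ℝ} (hq : q ∈ cone) : 0 < q.1 ^ 2 - q.2 ^ 2 := by
  have : |q.2| < q.1 := hq
  nlinarith [abs_nonneg q.2, sq_abs q.2]

noncomputable def monom (a b : ℝ) (q : ℝ × ℝ) : ℝ := q.1 ^ a * (q.1 ^ 2 - q.2 ^ 2) ^ b

section monom

variable {a b : ℝ} {q : ℝ × ℝ}

lemma monom_sub_one_left (hq : q ∈ cone) : monom (a - 1) b q = monom a b q / q.1 := by
  simp only [monom, Real.rpow_sub_one (fst_pos_of_mem_cone hq).ne']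
  ring

lemma monom_sub_one_right (hq : q ∈ cone) :
    monom a (b - 1) q = monom a b q / (q.1 ^ 2 - q.2 ^ 2) := by
  simp only [monom, Real.rpow_sub_one (sq_sub_sq_pos_of_mem_cone hq).ne']
  ring

lemma hasFDerivAt_monom (hq : q ∈ cone) :
    HasFDerivAt (monom a b)
      ((a * monom (a - 1) b q + 2 * b * q.1 * monom a (b - 1) q) • fst ℝ ℝ ℝ
        - (2 * b * q.2 * monom a (b - 1) q) • snd ℝ ℝ ℝ) q := by
  have hx : HasFDerivAt (fun r : ℝ × ℝ => r.1 ^ a) ((a * q.1 ^ (a - 1)) • fst ℝ ℝ ℝ) q :=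
    (Real.hasDerivAt_rpow_const (Or.inl (fst_pos_of_mem_cone hq).ne')).comp_hasFDerivAt q
      hasFDerivAt_fst
  have hD : HasFDerivAt (fun r : ℝ × ℝ => r.1 ^ 2 - r.2 ^ 2)
      ((2 * q.1) • fst ℝ ℝ ℝ - (2 * q.2) • snd ℝ ℝ ℝ) q :=
    ((hasFDerivAt_fst.pow 2).fun_sub (hasFDerivAt_snd.pow 2)).congr_fderiv
      (ContinuousLinearMap.ext fun v => by simp)
  have hDb := (Real.hasDerivAt_rpow_const (p := b)
    (Or.inl (sq_sub_sq_pos_of_mem_cone hq).ne')).comp_hasFDerivAt q hD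
  refine (hx.mul hDb).congr_fderiv (ContinuousLinearMap.ext fun v => ?_)
  simp only [monom, Function.comp_apply, add_apply, sub_apply, smul_apply, smul_eq_mul, coe_fst',
    coe_snd']
  ring

lemma pdx_monom (hq : q ∈ cone) :
    pdx (monom a b) q = a * monom (a - 1) b q + 2 * b * q.1 * monom a (b - 1) q := by
  simp [(hasFDerivAt_monom hq).pdx_eq]

lemma pdy_monom (hq : q ∈ cone) : pdy (monom a b) q = -(2 * b * q.2 * monom a (b - 1) q) := by
  simp [(hasFDerivAt_monom hq).pdy_eq]

lemma hessian_monom (hq : q ∈ cone) :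
    hessian (monom a b) q = monom a b q • !![
      a * (a - 1) / q.1 ^ 2 + 2 * b * (2 * a + 1) / (q.1 ^ 2 - q.2 ^ 2)
        + 4 * b * (b - 1) * q.1 ^ 2 / (q.1 ^ 2 - q.2 ^ 2) ^ 2,
      -(2 * a * b * q.2 / (q.1 * (q.1 ^ 2 - q.2 ^ 2)))
        - 4 * b * (b - 1) * q.1 * q.2 / (q.1 ^ 2 - q.2 ^ 2) ^ 2;
      -(2 * a * b * q.2 / (q.1 * (q.1 ^ 2 - q.2 ^ 2)))
        - 4 * b * (b - 1) * q.1 * q.2 / (q.1 ^ 2 - q.2 ^ 2) ^ 2,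
      -(2 * b / (q.1 ^ 2 - q.2 ^ 2)) + 4 * b * (b - 1) * q.2 ^ 2 / (q.1 ^ 2 - q.2 ^ 2) ^ 2] := by
  have near : ∀ᶠ r in 𝓝 q, r ∈ cone := isOpen_cone.mem_nhds hq
  have hpdx := (((hasFDerivAt_monom (a := a - 1) (b := b) hq).const_mul a).fun_add
    ((hasFDerivAt_fst.const_mul (2 * b)).mul (hasFDerivAt_monom (a := a) (b := b - 1) hq))
    ).congr_of_eventuallyEq (near.mono fun r hr => pdx_monom hr)
  have hpdy := ((hasFDerivAt_snd.const_mul (2 * b)).mul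
    (hasFDerivAt_monom (a := a) (b := b - 1) hq)).fun_neg.congr_of_eventuallyEq
    (near.mono fun r hr => pdy_monom hr)
  have hx := fst_pos_of_mem_cone hq
  have hD := sq_sub_sq_pos_of_mem_cone hq
  rw [hessian, hpdx.pdx_eq, hpdx.pdy_eq, hpdy.pdx_eq, hpdy.pdy_eq]
  ext i j
  fin_cases i <;> fin_cases j <;>
    simp only [Matrix.smul_apply, Matrix.of_apply, Matrix.cons_val', Matrix.cons_val_zero,
      Matrix.cons_val_one, Matrix.cons_val_fin_one, Fin.isValue, Fin.zero_eta, Fin.mk_one,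
      add_apply, sub_apply, neg_apply, smul_apply, coe_fst', coe_snd', smul_eq_mul,
      monom_sub_one_left hq, monom_sub_one_right hq] <;>
    field_simp <;> ring

end monom

/-- The Hessian determinant of powers of mean curvature `K = sgn(n)·xⁿ/(x²−y²)ⁿ` equals
`2n²(n+1)·x^{2n−2}/(x²−y²)^{2n+1}` on `U = {(x,y) : |y| < x}`. -/
theorem powers_of_mean_curvature_hessian_det (n : ℝ) (hn : n ≠ 0)
    (K : ℝ × ℝ → ℝ)
    (hK : K = fun q : ℝ × ℝ => Real.sign n * q.1 ^ n / (q.1 ^ 2 - q.2 ^ 2) ^ n) :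
    ∀ p : ℝ × ℝ, |p.2| < p.1 →
      (hessian K p).det =
        2 * n ^ 2 * (n + 1) * p.1 ^ (2 * n - 2) / (p.1 ^ 2 - p.2 ^ 2) ^ (2 * n + 1) := by
  intro p hp
  have hx := fst_pos_of_mem_cone hp
  have hD := sq_sub_sq_pos_of_mem_cone hp
  have hsign : Real.sign n ^ 2 = 1 := by
    rcases Real.sign_apply_eq_of_ne_zero n hn with h | h <;> simp [h]
  have hK_smul : K = Real.sign n • fun q : ℝ × ℝ => q.1 ^ n / (q.1 ^ 2 - q.2 ^ 2) ^ n := by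
    ext q
    simp [hK, mul_div_assoc]
  have hK_monom : (fun q : ℝ × ℝ => q.1 ^ n / (q.1 ^ 2 - q.2 ^ 2) ^ n) =ᶠ[𝓝 p] monom n (-n) :=
    eventually_of_mem (isOpen_cone.mem_nhds hp) fun q hq => by
      simp [monom, Real.rpow_neg (sq_sub_sq_pos_of_mem_cone hq).le, div_eq_mul_inv]
  have hpow : p.1 ^ (2 * n - 2) / (p.1 ^ 2 - p.2 ^ 2) ^ (2 * n + 1)
      = monom n (-n) p ^ 2 / (p.1 ^ 2 * (p.1 ^ 2 - p.2 ^ 2)) := by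
    rw [monom, Real.rpow_sub hx, Real.rpow_add hD, Real.rpow_neg hD.le, mul_comm 2 n,
      Real.rpow_mul hx.le, Real.rpow_mul hD.le]
    norm_cast
    field_simp
  rw [hK_smul, hessian_const_smul, hessian_congr hK_monom, hessian_monom hp, Matrix.det_smul,
    Matrix.det_smul, Matrix.det_fin_two_of, mul_div_assoc (2 * n ^ 2 * (n + 1)), hpow]
  simp only [Fintype.card_fin, hsign]
  field_simp
  ring
end
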